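/- Let H be a complex Hilbert space, A a positive bounded operator, T, S bounded operators admitting A-adjoints. Then w_A(T+S)² ≤ (1/2)( ‖T^♯T + S^♯S‖_A + ‖T^♯T − S^♯S‖_A ) + √(w_A(T^♯T) · w_A(S^♯S)) + 2 w_A(S^♯T). -/

import Mathlib

/-!
Fix an `A`-unit vector `x` and put `a = T x`, `b = S x`, so that
`⟪(T + S) x, x⟫_A = ⟪a, x⟫_A + ⟪b, x⟫_A`. In any semi-inner product space, Buzano's inequality
and the two-vector case of Bombieri's inequality add up to
`(|⟪a, x⟫| + |⟪b, x⟫|)² ≤ max (‖a‖², ‖b‖²) + ‖a‖ ‖b‖ + 2 |⟪a, b⟫|`.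
Here `‖a‖_A² = ⟪T^♯T x, x⟫_A`, `‖b‖_A² = ⟪S^♯S x, x⟫_A` and `⟪a, b⟫_A = ⟪S^♯T x, x⟫_A`, and
`max (s, t) = (s + t + |s - t|) / 2` bounds the maximum by `‖T^♯T ± S^♯S‖_A`.

The suprema defining `w_A` and `‖·‖_A` are finite because an operator with an `A`-adjoint is
`A`-bounded: for `A`-selfadjoint `Q`, Cauchy–Schwarz iterated along `Q, Q², Q⁴, …` gives
`‖Q x‖_A ^ 2ⁿ ≤ ‖Q ^ 2ⁿ x‖_A ≤ √‖A‖ ‖x‖ ‖Q‖ ^ 2ⁿ` for all `n`, hence `‖Q x‖_A ≤ ‖Q‖`.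
-/

open scoped InnerProductSpace

variable {H : Type*} [NormedAddCommGroup H] [InnerProductSpace ℂ H] [CompleteSpace H]

/-- The `A`-semi-inner product `⟪x, y⟫_A = ⟪A x, y⟫`. -/
noncomputable def ipA (A : H →L[ℂ] H) (x y : H) : ℂ := ⟪A x, y⟫_ℂ

/-- The `A`-semi-norm `‖x‖_A = √(re ⟪A x, x⟫)`. -/
noncomputable def nA (A : H →L[ℂ] H) (x : H) : ℝ := Real.sqrt (ipA A x x).re

/-- The `A`-numerical radius. -/
noncomputable def wA (A T : H →L[ℂ] H) : ℝ :=
  sSup {c : ℝ | ∃ x : H, nA A x = 1 ∧ c = ‖ipA A (T x) x‖}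

/-- The `A`-operator seminorm. -/
noncomputable def opA (A T : H →L[ℂ] H) : ℝ :=
  sSup {c : ℝ | ∃ x : H, nA A x = 1 ∧ c = nA A (T x)}

open scoped ComplexConjugate

section InnerProduct

variable {𝕜 E : Type*} [RCLike 𝕜] [SeminormedAddCommGroup E] [InnerProductSpace 𝕜 E]

open RCLike

theorem buzano_inequality {e : E} (he : ‖e‖ = 1) (a b : E) :
    2 * (‖⟪a, e⟫_𝕜‖ * ‖⟪b, e⟫_𝕜‖) ≤ ‖a‖ * ‖b‖ + ‖⟪a, b⟫_𝕜‖ := by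
  -- `v` is the reflection of `b` in the line through `e`, so `‖v‖ = ‖b‖`.
  set v : E := (2 * ⟪e, b⟫_𝕜) • e - b
  have hv : ‖v‖ = ‖b‖ := by
    have h1 : ‖(2 * ⟪e, b⟫_𝕜) • e‖ ^ 2 = 4 * ‖⟪e, b⟫_𝕜‖ ^ 2 := by
      rw [norm_smul, he, norm_mul, norm_two]; ring
    have h2 : ⟪(2 * ⟪e, b⟫_𝕜) • e, b⟫_𝕜 = ((2 * ‖⟪e, b⟫_𝕜‖ ^ 2 : ℝ) : 𝕜) := by
      rw [inner_smul_left, map_mul, map_ofNat, mul_assoc, RCLike.conj_mul]; push_cast; ring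
    have := norm_sub_sq (𝕜 := 𝕜) ((2 * ⟪e, b⟫_𝕜) • e) b
    rw [h1, h2, ofReal_re] at this
    nlinarith [norm_nonneg v, norm_nonneg b]
  have hav : 2 * ⟪e, b⟫_𝕜 * ⟪a, e⟫_𝕜 = ⟪a, v⟫_𝕜 + ⟪a, b⟫_𝕜 := by
    simp [v, inner_sub_right, inner_smul_right]
  calc 2 * (‖⟪a, e⟫_𝕜‖ * ‖⟪b, e⟫_𝕜‖) = ‖2 * ⟪e, b⟫_𝕜 * ⟪a, e⟫_𝕜‖ := by
        rw [norm_mul, norm_mul, norm_two, norm_inner_symm b]; ring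
    _ ≤ ‖⟪a, v⟫_𝕜‖ + ‖⟪a, b⟫_𝕜‖ := hav ▸ norm_add_le _ _
    _ ≤ ‖a‖ * ‖b‖ + ‖⟪a, b⟫_𝕜‖ := by grw [norm_inner_le_norm, hv]

theorem bombieri_inequality_two {e : E} (he : ‖e‖ = 1) (a b : E) :
    ‖⟪a, e⟫_𝕜‖ ^ 2 + ‖⟪b, e⟫_𝕜‖ ^ 2 ≤ max (‖a‖ ^ 2) (‖b‖ ^ 2) + ‖⟪a, b⟫_𝕜‖ := by
  set α := ⟪a, e⟫_𝕜
  set β := ⟪b, e⟫_𝕜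
  set N := ‖α‖ ^ 2 + ‖β‖ ^ 2
  set w : E := α • a + β • b
  have hwe : ⟪w, e⟫_𝕜 = (N : 𝕜) := by
    simp only [w, N, inner_add_left, inner_smul_left]
    rw [RCLike.conj_mul, RCLike.conj_mul]; push_cast; rfl
  have hN : N ≤ ‖w‖ := by
    calc N = ‖⟪w, e⟫_𝕜‖ := by rw [hwe, norm_ofReal, abs_of_nonneg (by positivity)]
      _ ≤ ‖w‖ := by simpa [he] using norm_inner_le_norm (𝕜 := 𝕜) w e
  have hcross : re ⟪α • a, β • b⟫_𝕜 ≤ ‖α‖ * ‖β‖ * ‖⟪a, b⟫_𝕜‖ := by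
    refine (re_le_norm _).trans (le_of_eq ?_)
    rw [inner_smul_left, inner_smul_right, norm_mul, norm_mul, norm_conj, mul_assoc]
  have hw : ‖w‖ ^ 2 ≤ N * (max (‖a‖ ^ 2) (‖b‖ ^ 2) + ‖⟪a, b⟫_𝕜‖) := by
    have hab := le_max_left (‖a‖ ^ 2) (‖b‖ ^ 2)
    have hba := le_max_right (‖a‖ ^ 2) (‖b‖ ^ 2)
    rw [norm_add_sq (𝕜 := 𝕜), norm_smul, norm_smul]
    nlinarith [sq_nonneg (‖α‖ - ‖β‖), norm_nonneg ⟪a, b⟫_𝕜, sq_nonneg ‖α‖, sq_nonneg ‖β‖]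
  rcases (show 0 ≤ N by positivity).eq_or_lt with hN0 | hN0
  · rw [← hN0]; positivity
  · nlinarith

theorem norm_inner_add_norm_inner_sq_le {e : E} (he : ‖e‖ = 1) (a b : E) :
    (‖⟪a, e⟫_𝕜‖ + ‖⟪b, e⟫_𝕜‖) ^ 2 ≤
      max (‖a‖ ^ 2) (‖b‖ ^ 2) + ‖a‖ * ‖b‖ + 2 * ‖⟪a, b⟫_𝕜‖ := by
  linarith [buzano_inequality (𝕜 := 𝕜) he a b, bombieri_inequality_two (𝕜 := 𝕜) he a b]

end InnerProduct

theorem le_of_forall_pow_two_pow_le_mul_pow {a q C : ℝ} (hq : 0 ≤ q)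
    (h : ∀ n : ℕ, a ^ 2 ^ n ≤ C * q ^ 2 ^ n) : a ≤ q := by
  by_contra! hqa
  rcases hq.eq_or_lt with rfl | hq
  · simpa [hqa.not_ge] using h 0
  have hr : 1 < a / q := (one_lt_div hq).2 hqa
  obtain ⟨n, hn⟩ := pow_unbounded_of_one_lt C hr
  have hC : (a / q) ^ 2 ^ n ≤ C := by
    rw [div_pow, div_le_iff₀ (by positivity)]
    exact h n
  exact (hn.trans_le (pow_le_pow_right₀ hr.le Nat.lt_two_pow_self.le)).not_ge hC

section SemiInner

variable {H : Type*} [NormedAddCommGroup H] [InnerProductSpace ℂ H] {A : H →L[ℂ] H}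

theorem conj_ipA (hA : A.IsPositive) (x y : H) : conj (ipA A x y) = ipA A y x := by
  simp only [ipA, inner_conj_symm]
  exact (hA.isSymmetric y x).symm

theorem re_ipA_self_nonneg (hA : A.IsPositive) (x : H) : 0 ≤ (ipA A x x).re :=
  hA.re_inner_nonneg_left x

theorem ipA_add_left (x y z : H) : ipA A (x + y) z = ipA A x z + ipA A y z := by
  simp only [ipA, map_add, inner_add_left]

theorem ipA_sub_left (x y z : H) : ipA A (x - y) z = ipA A x z - ipA A y z := by
  simp only [ipA, map_sub, inner_sub_left]

theorem ipA_add_right (x y z : H) : ipA A x (y + z) = ipA A x y + ipA A x z :=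
  inner_add_right _ _ _

theorem ipA_sub_right (x y z : H) : ipA A x (y - z) = ipA A x y - ipA A x z :=
  inner_sub_right _ _ _

theorem ipA_smul_left (x y : H) (r : ℂ) : ipA A (r • x) y = conj r * ipA A x y := by
  simp only [ipA, map_smul, inner_smul_left]

def WithA (_A : H →L[ℂ] H) : Type _ := H

instance : AddCommGroup (WithA A) := inferInstanceAs (AddCommGroup H)
instance : Module ℂ (WithA A) := inferInstanceAs (Module ℂ H)

noncomputable instance [hA : Fact A.IsPositive] : PreInnerProductSpace.Core ℂ (WithA A) where
  inner x y := ipA A x y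
  conj_inner_symm x y := conj_ipA (H := H) hA.out y x
  re_inner_nonneg := re_ipA_self_nonneg (H := H) hA.out
  add_left := ipA_add_left (H := H)
  smul_left := ipA_smul_left (H := H)

noncomputable instance [Fact A.IsPositive] : SeminormedAddCommGroup (WithA A) :=
  InnerProductSpace.Core.toSeminormedAddCommGroup (𝕜 := ℂ)

noncomputable instance [Fact A.IsPositive] : InnerProductSpace ℂ (WithA A) :=
  InnerProductSpace.ofCore (𝕜 := ℂ) inferInstance

theorem norm_ipA_le (hA : A.IsPositive) (x y : H) : ‖ipA A x y‖ ≤ nA A x * nA A y :=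
  haveI : Fact A.IsPositive := ⟨hA⟩
  norm_inner_le_norm (𝕜 := ℂ) (E := WithA A) x y

theorem norm_ipA_add_norm_ipA_sq_le (hA : A.IsPositive) {e : H} (he : nA A e = 1) (a b : H) :
    (‖ipA A a e‖ + ‖ipA A b e‖) ^ 2 ≤
      max (nA A a ^ 2) (nA A b ^ 2) + nA A a * nA A b + 2 * ‖ipA A a b‖ :=
  haveI : Fact A.IsPositive := ⟨hA⟩
  norm_inner_add_norm_inner_sq_le (𝕜 := ℂ) (E := WithA A) he a b

theorem nA_nonneg (x : H) : 0 ≤ nA A x := Real.sqrt_nonneg _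

theorem nA_sq (hA : A.IsPositive) (x : H) : nA A x ^ 2 = (ipA A x x).re :=
  Real.sq_sqrt (re_ipA_self_nonneg hA x)

theorem norm_ipA_le_nA (hA : A.IsPositive) {x : H} (hx : nA A x = 1) (y : H) :
    ‖ipA A y x‖ ≤ nA A y := by
  simpa [hx] using norm_ipA_le hA y x

theorem nA_le_sqrt_norm_mul_norm (x : H) : nA A x ≤ √‖A‖ * ‖x‖ := by
  have h : (ipA A x x).re ≤ ‖A‖ * ‖x‖ ^ 2 :=
    calc (ipA A x x).re ≤ ‖A x‖ * ‖x‖ := (Complex.re_le_norm _).trans (norm_inner_le_norm _ _)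
      _ ≤ ‖A‖ * ‖x‖ * ‖x‖ := by gcongr; exact A.le_opNorm x
      _ = ‖A‖ * ‖x‖ ^ 2 := by ring
  calc nA A x ≤ √(‖A‖ * ‖x‖ ^ 2) := Real.sqrt_le_sqrt h
    _ = √‖A‖ * ‖x‖ := by rw [Real.sqrt_mul (norm_nonneg A), Real.sqrt_sq (norm_nonneg x)]

def IsAdjointA (A R Rs : H →L[ℂ] H) : Prop := ∀ x y, ipA A (R x) y = ipA A x (Rs y)

namespace IsAdjointA

variable {R Rs R' Rs' Q : H →L[ℂ] H}

theorem symm (hA : A.IsPositive) (h : IsAdjointA A R Rs) : IsAdjointA A Rs R := fun x y => by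
  rw [← conj_ipA hA, ← h, conj_ipA hA]

theorem comp (h : IsAdjointA A R Rs) (h' : IsAdjointA A R' Rs') :
    IsAdjointA A (R' ∘L R) (Rs ∘L Rs') := fun x y =>
  (h' (R x) y).trans (h x (Rs' y))

theorem add (h : IsAdjointA A R Rs) (h' : IsAdjointA A R' Rs') :
    IsAdjointA A (R + R') (Rs + Rs') := fun x y => by
  rw [add_apply, add_apply, ipA_add_left, ipA_add_right, h, h']

theorem sub (h : IsAdjointA A R Rs) (h' : IsAdjointA A R' Rs') :
    IsAdjointA A (R - R') (Rs - Rs') := fun x y => by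
  rw [sub_apply, sub_apply, ipA_sub_left, ipA_sub_right, h, h']

theorem pow (hQ : IsAdjointA A Q Q) (n : ℕ) : IsAdjointA A (Q ^ n) (Q ^ n) := by
  induction n with
  | zero => intro x y; rfl
  | succ n ih =>
    simpa only [← ContinuousLinearMap.mul_def, ← pow_succ, ← pow_succ'] using ih.comp hQ

theorem nA_apply_sq_le (hA : A.IsPositive) (h : IsAdjointA A R Rs) (x : H) :
    nA A (R x) ^ 2 ≤ nA A ((Rs ∘L R) x) * nA A x := by
  calc nA A (R x) ^ 2 = (ipA A ((Rs ∘L R) x) x).re := by rw [nA_sq hA, ← h.symm hA]; rfl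
    _ ≤ nA A ((Rs ∘L R) x) * nA A x := (Complex.re_le_norm _).trans (norm_ipA_le hA _ _)

theorem nA_pow_apply_sq_le (hA : A.IsPositive) (hQ : IsAdjointA A Q Q) {x : H}
    (hx : nA A x = 1) (k : ℕ) : nA A ((Q ^ k) x) ^ 2 ≤ nA A ((Q ^ (2 * k)) x) := by
  have := (hQ.pow k).nA_apply_sq_le hA x
  rwa [hx, mul_one, ← ContinuousLinearMap.mul_def, ← pow_add, ← two_mul] at this

theorem nA_apply_le_opNorm (hA : A.IsPositive) (hQ : IsAdjointA A Q Q) {x : H}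
    (hx : nA A x = 1) : nA A (Q x) ≤ ‖Q‖ := by
  have hiter : ∀ n : ℕ, nA A (Q x) ^ 2 ^ n ≤ nA A ((Q ^ 2 ^ n) x) := by
    intro n
    induction n with
    | zero => simp
    | succ n ih =>
      calc nA A (Q x) ^ 2 ^ (n + 1) = (nA A (Q x) ^ 2 ^ n) ^ 2 := by rw [pow_succ, pow_mul]
        _ ≤ nA A ((Q ^ 2 ^ n) x) ^ 2 := pow_le_pow_left₀ (pow_nonneg (nA_nonneg _) _) ih 2
        _ ≤ nA A ((Q ^ 2 ^ (n + 1)) x) := by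
          rw [pow_succ' 2 n]; exact hQ.nA_pow_apply_sq_le hA hx _
  refine le_of_forall_pow_two_pow_le_mul_pow (norm_nonneg Q) (C := √‖A‖ * ‖x‖) fun n => ?_
  calc nA A (Q x) ^ 2 ^ n ≤ nA A ((Q ^ 2 ^ n) x) := hiter n
    _ ≤ √‖A‖ * ‖(Q ^ 2 ^ n) x‖ := nA_le_sqrt_norm_mul_norm _
    _ ≤ √‖A‖ * (‖Q‖ ^ 2 ^ n * ‖x‖) := by
      gcongr
      exact ((Q ^ 2 ^ n).le_opNorm x).trans (by gcongr; exact norm_pow_le' Q (by positivity))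
    _ = √‖A‖ * ‖x‖ * ‖Q‖ ^ 2 ^ n := by ring

theorem nA_apply_le_sqrt_norm_comp (hA : A.IsPositive) (h : IsAdjointA A R Rs) {x : H}
    (hx : nA A x = 1) :
    nA A (R x) ≤ √‖Rs ∘L R‖ := by
  have hsq := h.nA_apply_sq_le hA x
  rw [hx, mul_one] at hsq
  exact Real.le_sqrt_of_sq_le (hsq.trans ((h.comp (h.symm hA)).nA_apply_le_opNorm hA hx))

theorem nA_apply_le_opA (hA : A.IsPositive) (h : IsAdjointA A R Rs) {x : H} (hx : nA A x = 1) :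
    nA A (R x) ≤ opA A R :=
  le_csSup ⟨√‖Rs ∘L R‖, by rintro _ ⟨y, hy, rfl⟩; exact h.nA_apply_le_sqrt_norm_comp hA hy⟩
    ⟨x, hx, rfl⟩

theorem norm_ipA_apply_le_wA (hA : A.IsPositive) (h : IsAdjointA A R Rs) {x : H}
    (hx : nA A x = 1) : ‖ipA A (R x) x‖ ≤ wA A R :=
  le_csSup ⟨√‖Rs ∘L R‖, by
    rintro _ ⟨y, hy, rfl⟩
    exact (norm_ipA_le_nA hA hy _).trans (h.nA_apply_le_sqrt_norm_comp hA hy)⟩ ⟨x, hx, rfl⟩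

theorem norm_ipA_apply_le_opA (hA : A.IsPositive) (h : IsAdjointA A R Rs) {x : H}
    (hx : nA A x = 1) : ‖ipA A (R x) x‖ ≤ opA A R :=
  (norm_ipA_le_nA hA hx _).trans (h.nA_apply_le_opA hA hx)

end IsAdjointA

theorem wA_nonneg (R : H →L[ℂ] H) : 0 ≤ wA A R :=
  Real.sSup_nonneg (by rintro _ ⟨x, -, rfl⟩; exact norm_nonneg _)

theorem opA_nonneg (R : H →L[ℂ] H) : 0 ≤ opA A R :=
  Real.sSup_nonneg (by rintro _ ⟨x, -, rfl⟩; exact nA_nonneg _)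

theorem wA_sq_le_of_forall {R : H →L[ℂ] H} {c : ℝ} (hc : 0 ≤ c)
    (h : ∀ x, nA A x = 1 → ‖ipA A (R x) x‖ ^ 2 ≤ c) : wA A R ^ 2 ≤ c :=
  (Real.le_sqrt (wA_nonneg R) hc).1 <|
    Real.sSup_le (by rintro _ ⟨x, hx, rfl⟩; exact Real.le_sqrt_of_sq_le (h x hx))
      (Real.sqrt_nonneg c)

theorem norm_ipA_add_apply_sq_le (hA : A.IsPositive) {T Ts S Ss : H →L[ℂ] H}
    (hT : IsAdjointA A T Ts) (hS : IsAdjointA A S Ss) {x : H} (hx : nA A x = 1) :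
    ‖ipA A ((T + S) x) x‖ ^ 2 ≤
      (1 / 2) * (opA A (Ts ∘L T + Ss ∘L S) + opA A (Ts ∘L T - Ss ∘L S)) +
        √(wA A (Ts ∘L T) * wA A (Ss ∘L S)) + 2 * wA A (Ss ∘L T) := by
  have hTT := hT.comp (hT.symm hA)
  have hSS := hS.comp (hS.symm hA)
  have hTx : (ipA A ((Ts ∘L T) x) x).re = nA A (T x) ^ 2 := by
    rw [nA_sq hA]; exact congrArg _ (hT.symm hA _ _)
  have hSx : (ipA A ((Ss ∘L S) x) x).re = nA A (S x) ^ 2 := by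
    rw [nA_sq hA]; exact congrArg _ (hS.symm hA _ _)
  have hsum : nA A (T x) ^ 2 + nA A (S x) ^ 2 ≤ opA A (Ts ∘L T + Ss ∘L S) := by
    rw [← hTx, ← hSx, ← Complex.add_re, ← ipA_add_left]
    exact (Complex.re_le_norm _).trans ((hTT.add hSS).norm_ipA_apply_le_opA hA hx)
  have hdiff : |nA A (T x) ^ 2 - nA A (S x) ^ 2| ≤ opA A (Ts ∘L T - Ss ∘L S) := by
    rw [← hTx, ← hSx, ← Complex.sub_re, ← ipA_sub_left]
    exact (Complex.abs_re_le_norm _).trans ((hTT.sub hSS).norm_ipA_apply_le_opA hA hx)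
  have hmax : max (nA A (T x) ^ 2) (nA A (S x) ^ 2) ≤
      (1 / 2) * (opA A (Ts ∘L T + Ss ∘L S) + opA A (Ts ∘L T - Ss ∘L S)) := by
    have := abs_le.1 hdiff
    exact max_le (by linarith) (by linarith)
  have hTw : nA A (T x) ^ 2 ≤ wA A (Ts ∘L T) :=
    hTx ▸ (Complex.re_le_norm _).trans (hTT.norm_ipA_apply_le_wA hA hx)
  have hSw : nA A (S x) ^ 2 ≤ wA A (Ss ∘L S) :=
    hSx ▸ (Complex.re_le_norm _).trans (hSS.norm_ipA_apply_le_wA hA hx)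
  have hprod : nA A (T x) * nA A (S x) ≤ √(wA A (Ts ∘L T) * wA A (Ss ∘L S)) := by
    rw [← Real.sqrt_sq (mul_nonneg (nA_nonneg _) (nA_nonneg _)), mul_pow]
    exact Real.sqrt_le_sqrt (mul_le_mul hTw hSw (sq_nonneg _) (wA_nonneg _))
  have hcross : ‖ipA A (T x) (S x)‖ ≤ wA A (Ss ∘L T) :=
    hS.symm hA (T x) x ▸ (hT.comp (hS.symm hA)).norm_ipA_apply_le_wA hA hx
  calc ‖ipA A ((T + S) x) x‖ ^ 2 ≤ (‖ipA A (T x) x‖ + ‖ipA A (S x) x‖) ^ 2 := by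
        rw [add_apply, ipA_add_left]; gcongr; exact norm_add_le _ _
    _ ≤ max (nA A (T x) ^ 2) (nA A (S x) ^ 2) + nA A (T x) * nA A (S x) +
          2 * ‖ipA A (T x) (S x)‖ := norm_ipA_add_norm_ipA_sq_le hA hx _ _
    _ ≤ _ := by gcongr

end SemiInner

theorem stmt14 (A : H →L[ℂ] H) (hA : A.IsPositive) (T Ts S Ss : H →L[ℂ] H)
    (hadjT : ∀ x y : H, ipA A (T x) y = ipA A x (Ts y))
    (hadjS : ∀ x y : H, ipA A (S x) y = ipA A x (Ss y)) :
    wA A (T + S) ^ 2 ≤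
      (1 / 2) * (opA A (Ts ∘L T + Ss ∘L S) + opA A (Ts ∘L T - Ss ∘L S)) +
        Real.sqrt (wA A (Ts ∘L T) * wA A (Ss ∘L S)) + 2 * wA A (Ss ∘L T) := by
  refine wA_sq_le_of_forall ?_ fun x hx => norm_ipA_add_apply_sq_le hA hadjT hadjS hx
  have := opA_nonneg (A := A) (Ts ∘L T + Ss ∘L S)
  have := opA_nonneg (A := A) (Ts ∘L T - Ss ∘L S)
  have := wA_nonneg (A := A) (Ss ∘L T)
  positivity
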